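/- For 0<q<1 and a nonnegative integer n, the finite sum ∑_{k=0}^n ((q^{-n};q)_k (a x;q)_k/(q;q)_k) q^k = (a x)^n, i.e. ₂Φ₁(q^{-n}, ax; 0; q; q) = (ax)^n. -/

import Mathlib

open Finset

noncomputable def qPoch (q a : ℂ) (n : ℕ) : ℂ := ∏ k ∈ Finset.range n, (1 - a * q ^ k)

noncomputable def qPochInf (q a : ℂ) : ℂ := ∏' k : ℕ, (1 - a * q ^ k)

noncomputable def cauchyP (q x y : ℂ) (n : ℕ) : ℂ := ∏ k ∈ Finset.range n, (x - q ^ k * y)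

noncomputable def qBinom (q : ℂ) (n k : ℕ) : ℂ := qPoch q q n / (qPoch q q k * qPoch q q (n - k))

noncomputable def Dq (q : ℂ) (f : ℂ → ℂ) : ℂ → ℂ := fun a => (f a - f (q * a)) / a

noncomputable def thetaq (q : ℂ) (f : ℂ → ℂ) : ℂ → ℂ := fun a => (f (a / q) - f a) / (a / q)

noncomputable def qIntegral (q : ℂ) (f : ℂ → ℂ) (c d : ℂ) : ℂ :=
  (1 - q) * ∑' n : ℕ, q ^ n * (d * f (d * q ^ n) - c * f (c * q ^ n))

/-!
Write `t_k(c) = q^k (c;q)_k / (q;q)_k` (`qWeight`). Comparing `(c;q)_{k+1} = (1-c)(cq;q)_k` with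
`(cq;q)_{k+1} = (cq;q)_k (1 - cq^{k+1})` gives the q-Pascal rule
`t_{k+1}(c) = t_{k+1}(cq) - cq t_k(cq)`, while `(b;q)_{k+1} = (1-b)(bq;q)_k`.
For `c = q^{-n-1}` these split the sum of order `n+1` at `b` into the sum of order `n` at `b`
(the extra term vanishes since `(q^{-n};q)_{n+1} = 0`) minus `q^{-n}(1-b)` times the sum of
order `n` at `bq`, so by induction it equals `b^n - q^{-n}(1-b)(bq)^n = b^{n+1}`.
-/

section

variable (q : ℂ)

@[simp]
lemma qPoch_zero (a : ℂ) : qPoch q a 0 = 1 := prod_range_zero _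

lemma qPoch_succ (a : ℂ) (k : ℕ) : qPoch q a (k + 1) = qPoch q a k * (1 - a * q ^ k) :=
  prod_range_succ _ _

lemma qPoch_succ' (a : ℂ) (k : ℕ) : qPoch q a (k + 1) = (1 - a) * qPoch q (a * q) k := by
  rw [qPoch, prod_range_succ', pow_zero, mul_one, mul_comm, qPoch]
  simp only [pow_succ', mul_assoc]

lemma qPoch_ne_zero_of_le {a : ℂ} {k n : ℕ} (h : qPoch q a n ≠ 0) (hkn : k ≤ n) :
    qPoch q a k ≠ 0 := by
  induction n, hkn using Nat.le_induction with
  | base => exact h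
  | succ m _ ih => exact ih (left_ne_zero_of_mul (qPoch_succ q a m ▸ h))

lemma qPoch_eq_zero_of_mul_pow_eq_one {c : ℂ} {n : ℕ} (hc : c * q ^ n = 1) :
    qPoch q c (n + 1) = 0 := by
  rw [qPoch_succ, hc, sub_self, mul_zero]

noncomputable def qWeight (c : ℂ) (k : ℕ) : ℂ := q ^ k * qPoch q c k / qPoch q q k

@[simp]
lemma qWeight_zero (c : ℂ) : qWeight q c 0 = 1 := by simp [qWeight]

lemma qWeight_succ {c : ℂ} {k : ℕ} (hk : qPoch q q (k + 1) ≠ 0) :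
    qWeight q c (k + 1) = qWeight q (c * q) (k + 1) - c * q * qWeight q (c * q) k := by
  rw [qPoch_succ] at hk
  obtain ⟨hPk, hlast⟩ := mul_ne_zero_iff.mp hk
  rw [qWeight, qWeight, qWeight, qPoch_succ' q c, qPoch_succ q (c * q), qPoch_succ q q]
  field_simp
  ring

lemma sum_qWeight_mul_qPoch {n : ℕ} {c : ℂ} (hc : c * q ^ n = 1) (hq : qPoch q q n ≠ 0)
    (b : ℂ) : ∑ k ∈ range (n + 1), qWeight q c k * qPoch q b k = b ^ n := by
  induction n generalizing b c with
  | zero => simp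
  | succ n ih =>
    have hcq : c * q * q ^ n = 1 := by rw [mul_assoc, ← pow_succ', hc]
    have ih' := ih hcq (qPoch_ne_zero_of_le q hq n.le_succ)
    have htop : ∑ k ∈ range (n + 1), qWeight q (c * q) (k + 1) * qPoch q b (k + 1) + 1
        = b ^ n := calc
      _ = ∑ k ∈ range (n + 2), qWeight q (c * q) k * qPoch q b k := by
        rw [sum_range_succ' _ (n + 1)]; simp
      _ = b ^ n := by
        rw [sum_range_succ, ih' b, qWeight, qPoch_eq_zero_of_mul_pow_eq_one q hcq]; simp
    have hshift : ∑ k ∈ range (n + 1), qWeight q (c * q) k * qPoch q b (k + 1)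
        = (1 - b) * (b * q) ^ n := by
      rw [← ih' (b * q), mul_sum]
      exact sum_congr rfl fun k _ ↦ by rw [qPoch_succ']; ring
    have hpascal : ∀ k ∈ range (n + 1), qWeight q c (k + 1) * qPoch q b (k + 1)
        = qWeight q (c * q) (k + 1) * qPoch q b (k + 1)
          - c * q * (qWeight q (c * q) k * qPoch q b (k + 1)) := fun k hk ↦ by
      rw [qWeight_succ q (qPoch_ne_zero_of_le q hq (by simpa using hk))]
      ring
    rw [sum_range_succ', sum_congr rfl hpascal, sum_sub_distrib, ← mul_sum, hshift,
      qWeight_zero, qPoch_zero]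
    linear_combination htop - (1 - b) * b ^ n * hcq

end

lemma qPoch_ne_zero_of_norm_lt_one {q a : ℂ} (ha : ‖a‖ < 1) (hq : ‖q‖ ≤ 1) (n : ℕ) :
    qPoch q a n ≠ 0 := by
  refine prod_ne_zero_iff.mpr fun k _ h ↦ ?_
  have hnorm : ‖a * q ^ k‖ < 1 := calc
    ‖a * q ^ k‖ = ‖a‖ * ‖q‖ ^ k := by rw [norm_mul, norm_pow]
    _ ≤ ‖a‖ := mul_le_of_le_one_right (norm_nonneg a) (pow_le_one₀ (norm_nonneg q) hq)
    _ < 1 := ha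
  rw [← eq_of_sub_eq_zero h, norm_one] at hnorm
  exact lt_irrefl 1 hnorm

theorem phi21_qinvn_ax (q : ℝ) (hq0 : 0 < q) (hq1 : q < 1) (n : ℕ) (a x : ℂ) :
    ∑ k ∈ Finset.range (n + 1),
        qPoch (q : ℂ) ((q : ℂ) ^ (-(n : ℤ))) k * qPoch (q : ℂ) (a * x) k /
          qPoch (q : ℂ) (q : ℂ) k * (q : ℂ) ^ k
      = (a * x) ^ n := by
  have hnorm : ‖(q : ℂ)‖ < 1 := by rwa [Complex.norm_real, Real.norm_of_nonneg hq0.le]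
  have hc : (q : ℂ) ^ (-(n : ℤ)) * (q : ℂ) ^ n = 1 := by
    rw [zpow_neg, zpow_natCast, inv_mul_cancel₀ (pow_ne_zero n (by exact_mod_cast hq0.ne'))]
  rw [← sum_qWeight_mul_qPoch (q : ℂ) hc (qPoch_ne_zero_of_norm_lt_one hnorm hnorm.le n)]
  exact sum_congr rfl fun k _ ↦ by rw [qWeight]; ring
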